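/- Let $C_{AB}^C$ be the structure constants of a real Lie algebra $\mathfrak{g}$ with basis split as $\{e_a\}\cup\{e_\alpha\}$, where $\mathfrak{h}=\mathrm{span}\{e_\alpha\}$ is a subalgebra, and let $G_{ab}$ be a symmetric nondegenerate matrix satisfying $G_{ab}C_{c\alpha}^a + G_{ac}C_{b\alpha}^a = 0$. Define $\Gamma^a_{bc} = -\tfrac12 C^a_{bc} - \tfrac12 G^{ad}(G_{ec}C^e_{bd} + G_{eb}C^e_{cd})$. Then for all indices $\alpha, a, b, c$: $C_{\alpha e}^{c}\Gamma_{ba}^{e} = C_{\alpha a}^{e}\Gamma_{be}^{c} + C_{\alpha b}^{e}\Gamma_{ea}^{c} + C_{\alpha a}^{\beta}C_{\beta b}^{c}$, where $e$ runs over the $\mathfrak{m}$-indices and $\beta$ over the $\mathfrak{h}$-indices. -/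

import Mathlib

/-!
Lower the free index with `G`. The lowered Christoffel symbols are then given by the Koszul
formula `-½(⟨[y,z],x⟩ + ⟨[y,x],z⟩ + ⟨[z,x],y⟩)` in the `G`-lowered `𝔪`-bracket, and the claim
says that the `𝔪`-block `D` of `ad α` acts on this trilinear form as a derivation up to an
`𝔥`-term. For the lowered bracket itself this is the Jacobi identity for `(α, x, y)`: since
`[α, 𝔥] ⊆ 𝔥` and `D` is `G`-skew (`Ad(H)`-invariance), its defect consists only of terms through
`[α, ·]_𝔥`. Of the 𝔥-terms of the three permuted Jacobi identities all but one cancel in pairs,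
and the survivor is `C_{αa}^β C_{βb}^c`. Nondegeneracy of `G` raises the index again.
-/

open Finset

namespace StructureConstants

open Sum

variable {I J : Type*} [Fintype I] (C : I ⊕ J → I ⊕ J → I ⊕ J → ℝ) (G : I → I → ℝ)

/-- `⟨[X, Y]_𝔪, e_z⟩_G`. -/
def lowerBracket (X Y : I ⊕ J) (z : I) : ℝ := ∑ w, C X Y (inl w) * G w z

/-- `T(D x, y, z) + T(x, D y, z) + T(x, y, D z)` for the `𝔪`-block `D` of `ad α`. -/
def adDefect (α : J) (T : I → I → I → ℝ) (x y z : I) : ℝ :=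
  ∑ e, (C (inr α) (inl x) (inl e) * T e y z + C (inr α) (inl y) (inl e) * T x e z
    + C (inr α) (inl z) (inl e) * T x y e)

/-- The lowered Christoffel symbol `G_{xu} Γ^u_{yz}`, by the Koszul formula. -/
noncomputable def koszul (x y z : I) : ℝ :=
  -(1 / 2) * (lowerBracket C G (inl y) (inl z) x + lowerBracket C G (inl y) (inl x) z
    + lowerBracket C G (inl z) (inl x) y)

def IsJacobi [Fintype J] : Prop :=
  ∀ X Y Z W, ∑ V, (C X Y V * C V Z W + C Y Z V * C V X W + C Z X V * C V Y W) = 0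

def IsAdInvariant : Prop :=
  ∀ (b c : I) (α : J),
    ∑ a, (G a b * C (inl c) (inr α) (inl a) + G a c * C (inl b) (inr α) (inl a)) = 0

variable {C G}

theorem lowerBracket_swap (hanti : ∀ X Y Z, C X Y Z = - C Y X Z) (X Y : I ⊕ J) (z : I) :
    lowerBracket C G X Y z = - lowerBracket C G Y X z := by
  simp only [lowerBracket, hanti X Y, neg_mul, sum_neg_distrib]

theorem lowerBracket_inr_inr (hsub : ∀ (α β : J) (a : I), C (inr α) (inr β) (inl a) = 0)
    (α β : J) (z : I) : lowerBracket C G (inr α) (inr β) z = 0 := by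
  simp [lowerBracket, hsub]

theorem lowerBracket_inr_swap (hanti : ∀ X Y Z, C X Y Z = - C Y X Z)
    (hAdH : IsAdInvariant C G)
    (β : J) (x y : I) :
    lowerBracket C G (inr β) (inl x) y = - lowerBracket C G (inr β) (inl y) x := by
  have h := hAdH y x β
  simp only [hanti (inl _) (inr β), mul_neg, ← neg_add, sum_neg_distrib, neg_eq_zero,
    sum_add_distrib] at h
  simp only [lowerBracket, mul_comm (C _ _ _)]
  linarith

theorem sum_mul_lowerBracket_comm (hGsym : ∀ a b, G a b = G b a) (X Y Z W : I ⊕ J) :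
    ∑ e, C X Y (inl e) * lowerBracket C G Z W e
      = ∑ e, C Z W (inl e) * lowerBracket C G X Y e := by
  simp only [lowerBracket, mul_sum]
  rw [sum_comm]
  exact sum_congr rfl fun _ _ => sum_congr rfl fun _ _ => by rw [hGsym]; ring

theorem sum_sum_mul_comm {κ : Type*} [Fintype κ] (f : κ → ℝ) (g : κ → I → ℝ)
    (h : I → ℝ) : ∑ c, (∑ e, f e * g e c) * h c = ∑ e, f e * ∑ c, g e c * h c := by
  simp only [sum_mul, mul_sum, mul_assoc]
  exact sum_comm

theorem sum_ad_mul_eq_neg_sum (hanti : ∀ X Y Z, C X Y Z = - C Y X Z)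
    (hGsym : ∀ a b, G a b = G b a)
    (hAdH : IsAdInvariant C G)
    (α : J) (v : I → ℝ) (z : I) :
    ∑ c, (∑ e, C (inr α) (inl e) (inl c) * v e) * G c z
      = - ∑ u, C (inr α) (inl z) (inl u) * ∑ e, v e * G e u := by
  calc ∑ c, (∑ e, C (inr α) (inl e) (inl c) * v e) * G c z
      = ∑ e, v e * lowerBracket C G (inr α) (inl e) z := by
        simp only [lowerBracket, sum_mul, mul_sum]
        rw [sum_comm]
        exact sum_congr rfl fun _ _ => sum_congr rfl fun _ _ => by ring
    _ = - ∑ e, v e * lowerBracket C G (inr α) (inl z) e := by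
        simp only [lowerBracket_inr_swap hanti hAdH α _ z, mul_neg, sum_neg_distrib]
    _ = _ := by
        simp only [lowerBracket, mul_sum]
        rw [sum_comm]
        exact congrArg _ (sum_congr rfl fun _ _ => sum_congr rfl fun _ _ => by rw [hGsym]; ring)

theorem sum_jacobi_lowerBracket [Fintype J]
    (hjac : IsJacobi C)
    (X Y Z : I ⊕ J) (z : I) :
    ∑ V, (C X Y V * lowerBracket C G V Z z + C Y Z V * lowerBracket C G V X z
      + C Z X V * lowerBracket C G V Y z) = 0 := by
  simp only [lowerBracket, mul_sum, ← sum_add_distrib]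
  rw [sum_comm]
  refine sum_eq_zero fun w _ => ?_
  simp only [← mul_assoc, ← add_mul, ← sum_mul, hjac X Y Z (inl w), zero_mul]

theorem adDefect_lowerBracket [Fintype J] (hanti : ∀ X Y Z, C X Y Z = - C Y X Z)
    (hjac : IsJacobi C)
    (hsub : ∀ (α β : J) (a : I), C (inr α) (inr β) (inl a) = 0)
    (hGsym : ∀ a b, G a b = G b a)
    (hAdH : IsAdInvariant C G)
    (α : J) (x y z : I) :
    adDefect C α (fun x y z => lowerBracket C G (inl x) (inl y) z) x y z
      = ∑ β, (C (inr α) (inl y) (inr β) * lowerBracket C G (inr β) (inl x) z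
        - C (inr α) (inl x) (inr β) * lowerBracket C G (inr β) (inl y) z) := by
  have h := sum_jacobi_lowerBracket (G := G) hjac (inr α) (inl x) (inl y) z
  rw [Fintype.sum_sum_type] at h
  have hmixed : ∑ e, C (inl x) (inl y) (inl e) * lowerBracket C G (inl e) (inr α) z
      = ∑ e, C (inr α) (inl z) (inl e) * lowerBracket C G (inl x) (inl y) e := by
    simp only [lowerBracket_swap hanti (inl _) (inr α), lowerBracket_inr_swap hanti hAdH α _ z,
      neg_neg, sum_mul_lowerBracket_comm hGsym (inl x)]
  have hcyclic : ∑ e, C (inl y) (inr α) (inl e) * lowerBracket C G (inl e) (inl x) z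
      = ∑ e, C (inr α) (inl y) (inl e) * lowerBracket C G (inl x) (inl e) z := by
    simp only [hanti (inl y) (inr α), lowerBracket_swap hanti (inl _) (inl x), neg_mul_neg]
  have hsubalgebra : ∑ β, (C (inr α) (inl x) (inr β) * lowerBracket C G (inr β) (inl y) z
      + C (inl x) (inl y) (inr β) * lowerBracket C G (inr β) (inr α) z
      + C (inl y) (inr α) (inr β) * lowerBracket C G (inr β) (inl x) z)
      = ∑ β, (C (inr α) (inl x) (inr β) * lowerBracket C G (inr β) (inl y) z
        - C (inr α) (inl y) (inr β) * lowerBracket C G (inr β) (inl x) z) := by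
    simp only [lowerBracket_inr_inr hsub, hanti (inl y) (inr α), mul_zero, add_zero, neg_mul,
      sub_eq_add_neg]
  rw [hsubalgebra, sum_add_distrib, sum_add_distrib, hmixed, hcyclic] at h
  simp only [adDefect, sum_add_distrib, sum_sub_distrib] at h ⊢
  linarith

theorem adDefect_koszul_eq_adDefect_lowerBracket (α : J) (x y z : I) :
    adDefect C α (koszul C G) x y z = -(1 / 2) *
      (adDefect C α (fun x y z => lowerBracket C G (inl x) (inl y) z) y z x
        + adDefect C α (fun x y z => lowerBracket C G (inl x) (inl y) z) y x z
        + adDefect C α (fun x y z => lowerBracket C G (inl x) (inl y) z) z x y) := by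
  simp only [adDefect, koszul, mul_sum, ← sum_add_distrib]
  exact sum_congr rfl fun _ _ => by ring

theorem adDefect_koszul [Fintype J] (hanti : ∀ X Y Z, C X Y Z = - C Y X Z)
    (hjac : IsJacobi C)
    (hsub : ∀ (α β : J) (a : I), C (inr α) (inr β) (inl a) = 0)
    (hGsym : ∀ a b, G a b = G b a)
    (hAdH : IsAdInvariant C G)
    (α : J) (x y z : I) :
    adDefect C α (koszul C G) x y z
      = - ∑ β, C (inr α) (inl z) (inr β) * lowerBracket C G (inr β) (inl y) x := by
  simp only [adDefect_koszul_eq_adDefect_lowerBracket,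
    adDefect_lowerBracket hanti hjac hsub hGsym hAdH, ← sum_add_distrib, mul_sum,
    ← sum_neg_distrib]
  refine sum_congr rfl fun β _ => ?_
  rw [lowerBracket_inr_swap hanti hAdH β z x, lowerBracket_inr_swap hanti hAdH β x y,
    lowerBracket_inr_swap hanti hAdH β z y]
  ring

theorem sum_christoffel_mul_eq_koszul [DecidableEq I] (hGsym : ∀ a b, G a b = G b a)
    {Ginv : I → I → ℝ} (hGinv : ∀ a b, ∑ c, G a c * Ginv c b = if a = b then 1 else 0)
    {Γc : I → I → I → ℝ}
    (hΓ : ∀ a b c, Γc a b c = -(1/2) * C (inl b) (inl c) (inl a)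
      - (1/2) * ∑ d, ∑ e, Ginv a d *
        (G e c * C (inl b) (inl d) (inl e) + G e b * C (inl c) (inl d) (inl e)))
    (x y z : I) : ∑ u, Γc u y z * G u x = koszul C G x y z := by
  have hδ : ∀ d, ∑ u, Ginv u d * G u x = if x = d then 1 else 0 := fun d => by
    rw [← hGinv x d]
    exact sum_congr rfl fun u _ => by rw [hGsym u x, mul_comm]
  have hΓ' : ∀ u, Γc u y z = -(1 / 2) * C (inl y) (inl z) (inl u) - (1 / 2) * ∑ d, Ginv u d *
      (lowerBracket C G (inl y) (inl d) z + lowerBracket C G (inl z) (inl d) y) := fun u => by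
    simp only [hΓ, lowerBracket, mul_sum, ← sum_add_distrib, mul_comm (G _ _)]
  calc ∑ u, Γc u y z * G u x
      = -(1 / 2) * lowerBracket C G (inl y) (inl z) x - (1 / 2) * ∑ d, (∑ u, Ginv u d * G u x) *
          (lowerBracket C G (inl y) (inl d) z + lowerBracket C G (inl z) (inl d) y) := by
        simp only [hΓ', sub_mul, sum_sub_distrib]
        congr 1
        · simp only [lowerBracket, mul_sum, mul_assoc]
        · simp only [mul_sum, sum_mul]
          rw [sum_comm]
          exact sum_congr rfl fun _ _ => sum_congr rfl fun _ _ => by ring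
    _ = koszul C G x y z := by
        simp only [hδ, ite_mul, one_mul, zero_mul, sum_ite_eq, mem_univ, if_true, koszul]
        ring

theorem eq_of_forall_sum_mul_eq [DecidableEq I] {Ginv : I → I → ℝ}
    (hGinv : ∀ a b, ∑ c, G a c * Ginv c b = if a = b then 1 else 0) {v w : I → ℝ}
    (h : ∀ z, ∑ c, v c * G c z = ∑ c, w c * G c z) : v = w := by
  have hG : Matrix.of G * Matrix.of Ginv = 1 := by
    ext a b
    simp [Matrix.mul_apply, hGinv, Matrix.one_apply]
  have hvw : Matrix.vecMul v (Matrix.of G) = Matrix.vecMul w (Matrix.of G) := funext h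
  rw [← Matrix.vecMul_one v, ← Matrix.vecMul_one w, ← hG, ← Matrix.vecMul_vecMul,
    ← Matrix.vecMul_vecMul, hvw]

end StructureConstants

open StructureConstants

theorem christoffel_structure_identity
    {I J : Type*} [Fintype I] [Fintype J] [DecidableEq I]
    (C : (I ⊕ J) → (I ⊕ J) → (I ⊕ J) → ℝ)
    (hanti : ∀ X Y Z, C X Y Z = - C Y X Z)
    (hjac : ∀ X Y Z W, ∑ V, (C X Y V * C V Z W + C Y Z V * C V X W
      + C Z X V * C V Y W) = 0)
    (hsub : ∀ (α β : J) (a : I), C (Sum.inr α) (Sum.inr β) (Sum.inl a) = 0)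
    (G Ginv : I → I → ℝ)
    (hGsym : ∀ a b, G a b = G b a)
    (hGinv : ∀ a b, ∑ c, G a c * Ginv c b = if a = b then 1 else 0)
    (hAdH : ∀ (b c : I) (α : J), ∑ a, (G a b * C (Sum.inl c) (Sum.inr α) (Sum.inl a)
      + G a c * C (Sum.inl b) (Sum.inr α) (Sum.inl a)) = 0)
    (Γc : I → I → I → ℝ)
    (hΓ : ∀ a b c, Γc a b c = -(1/2) * C (Sum.inl b) (Sum.inl c) (Sum.inl a)
      - (1/2) * ∑ d, ∑ e, Ginv a d *
        (G e c * C (Sum.inl b) (Sum.inl d) (Sum.inl e)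
          + G e b * C (Sum.inl c) (Sum.inl d) (Sum.inl e))) :
    ∀ (α : J) (a b c : I),
      ∑ e, C (Sum.inr α) (Sum.inl e) (Sum.inl c) * Γc e b a
        = (∑ e, C (Sum.inr α) (Sum.inl a) (Sum.inl e) * Γc c b e)
          + (∑ e, C (Sum.inr α) (Sum.inl b) (Sum.inl e) * Γc c e a)
          + (∑ β : J, C (Sum.inr α) (Sum.inl a) (Sum.inr β)
              * C (Sum.inr β) (Sum.inl b) (Sum.inl c)) := by
  refine fun α a b => funext_iff.mp (eq_of_forall_sum_mul_eq hGinv fun z => ?_)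
  have hK := sum_christoffel_mul_eq_koszul hGsym hGinv hΓ
  have hinv := adDefect_koszul hanti hjac hsub hGsym hAdH α z b a
  rw [sum_ad_mul_eq_neg_sum hanti hGsym hAdH α]
  simp only [add_mul, sum_add_distrib, sum_sum_mul_comm, hK]
  simp only [adDefect, lowerBracket, sum_add_distrib, mul_sum] at hinv ⊢
  linarith
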